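/- arXiv:1701.06895 — 4 statements merged into one kernel-verified Lean document; each statement's English description precedes it below -/
import Mathlib

section
/- For every ξ ∈ ℝ³ and τ > 0, the convolution of the Lorentz invariant measure on the three-dimensional cone with itself satisfies (ν₃ ∗ ν₃)(ξ, τ) = 2π · χ(τ ≥ |ξ|). Equivalently, ∫_{ℝ³} δ(τ − |η| − |ξ−η|) / (|η| |ξ−η|) dη = 2π whenever τ ≥ |ξ| > 0, where the delta integral is interpreted as the density of the pushforward of the measure dη/(|η||ξ−η|) under η ↦ |η| + |ξ−η|. -/
open MeasureTheory Real Set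
open scoped ENNReal
set_option maxHeartbeats 1000000

noncomputable section

/-- Lintegral version of polar coordinates change of variables. -/
theorem my_lintegral_polar (f : ℝ × ℝ → ℝ≥0∞) :
    ∫⁻ p, f p = ∫⁻ p in polarCoord.target, ENNReal.ofReal p.1 * f (polarCoord.symm p) := by
  set B : ℝ × ℝ → ℝ × ℝ →L[ℝ] ℝ × ℝ := fun p =>
    LinearMap.toContinuousLinearMap (Matrix.toLin (Module.Basis.finTwoProd ℝ) (Module.Basis.finTwoProd ℝ)
      !![cos p.2, -p.1 * sin p.2; sin p.2, p.1 * cos p.2])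
  have B_det : ∀ p, (B p).det = p.1 := by
    intro p
    conv_rhs => rw [← one_mul p.1, ← cos_sq_add_sin_sq p.2]
    simp only [B, neg_mul, LinearMap.det_toContinuousLinearMap, LinearMap.det_toLin,
      Matrix.det_fin_two_of, sub_neg_eq_add]
    ring
  have hmt : MeasurableSet polarCoord.target := polarCoord.open_target.measurableSet
  calc
    ∫⁻ p, f p = ∫⁻ p in polarCoord.source, f p := by
      rw [← setLIntegral_univ]
      exact (setLIntegral_congr polarCoord_source_ae_eq_univ.symm)
    _ = ∫⁻ p in polarCoord.symm '' polarCoord.target, f p := by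
      rw [polarCoord.symm_image_target_eq_source]
    _ = ∫⁻ p in polarCoord.target, ENNReal.ofReal |(B p).det| * f (polarCoord.symm p) := by
      apply lintegral_image_eq_lintegral_abs_det_fderiv_mul volume hmt
        (fun p _ => (hasFDerivAt_polarCoord_symm p).hasFDerivWithinAt)
      exact polarCoord.symm.injOn
    _ = ∫⁻ p in polarCoord.target, ENNReal.ofReal p.1 * f (polarCoord.symm p) := by
      refine setLIntegral_congr_fun hmt (fun p hp => ?_)
      rw [B_det, abs_of_pos hp.1]


theorem core2d (r : ℝ) (hr : 0 < r) (H : ℝ → ℝ≥0∞) (hH : Measurable H) :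
    ∫⁻ p : ℝ × ℝ in (univ : Set ℝ) ×ˢ Ioi (0:ℝ),
        ENNReal.ofReal (p.2 / (Real.sqrt (p.1^2 + p.2^2) * Real.sqrt ((p.1 - r)^2 + p.2^2)))
          * H (Real.sqrt (p.1^2 + p.2^2) + Real.sqrt ((p.1 - r)^2 + p.2^2)) =
      ENNReal.ofReal (1 / (2*r)) * ∫⁻ q : ℝ × ℝ in Ioi r ×ˢ Ioo (-r) r, H q.1 := by
  set s : ℝ × ℝ → ℝ := fun p => Real.sqrt (p.1^2 + p.2^2) with hs_def
  set t : ℝ × ℝ → ℝ := fun p => Real.sqrt ((p.1 - r)^2 + p.2^2) with ht_def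
  set g : ℝ × ℝ → ℝ × ℝ := fun p => (s p + t p, s p - t p) with hg_def
  set A : Set (ℝ × ℝ) := (univ : Set ℝ) ×ˢ Ioi (0:ℝ) with hA_def
  have hA : MeasurableSet A := MeasurableSet.univ.prod measurableSet_Ioi
  have hmemA : ∀ p : ℝ × ℝ, p ∈ A ↔ 0 < p.2 := by
    intro p; simp [hA_def]
  -- basic inequalities
  have habs_s : ∀ p : ℝ × ℝ, p ∈ A → |p.1| < s p := by
    intro p hp
    rw [hmemA] at hp
    have h1 : p.1^2 < p.1^2 + p.2^2 := by nlinarith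
    calc |p.1| = Real.sqrt (p.1^2) := (Real.sqrt_sq_eq_abs _).symm
      _ < s p := Real.sqrt_lt_sqrt (sq_nonneg _) h1
  have habs_t : ∀ p : ℝ × ℝ, p ∈ A → |p.1 - r| < t p := by
    intro p hp
    rw [hmemA] at hp
    have h1 : (p.1 - r)^2 < (p.1 - r)^2 + p.2^2 := by nlinarith
    calc |p.1 - r| = Real.sqrt ((p.1 - r)^2) := (Real.sqrt_sq_eq_abs _).symm
      _ < t p := Real.sqrt_lt_sqrt (sq_nonneg _) h1
  have hs_pos : ∀ p : ℝ × ℝ, p ∈ A → 0 < s p :=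
    fun p hp => lt_of_le_of_lt (abs_nonneg _) (habs_s p hp)
  have ht_pos : ∀ p : ℝ × ℝ, p ∈ A → 0 < t p :=
    fun p hp => lt_of_le_of_lt (abs_nonneg _) (habs_t p hp)
  have hs_sq : ∀ p : ℝ × ℝ, (s p)^2 = p.1^2 + p.2^2 :=
    fun p => Real.sq_sqrt (by positivity)
  have ht_sq : ∀ p : ℝ × ℝ, (t p)^2 = (p.1 - r)^2 + p.2^2 :=
    fun p => Real.sq_sqrt (by positivity)
  -- the derivative
  set gd : ℝ × ℝ → (ℝ × ℝ) →L[ℝ] (ℝ × ℝ) := fun p =>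
    LinearMap.toContinuousLinearMap (Matrix.toLin (Module.Basis.finTwoProd ℝ) (Module.Basis.finTwoProd ℝ)
      !![p.1 / s p + (p.1 - r) / t p, p.2 / s p + p.2 / t p;
         p.1 / s p - (p.1 - r) / t p, p.2 / s p - p.2 / t p]) with hgd_def
  have hgd : ∀ p ∈ A, HasFDerivAt g (gd p) p := by
    intro p hp
    have hsne : s p ≠ 0 := (hs_pos p hp).ne'
    have htne : t p ≠ 0 := (ht_pos p hp).ne'
    have hsq_ne : p.1^2 + p.2^2 ≠ 0 := by
      intro h; apply hsne; rw [hs_def]; simp [h]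
    have htq_ne : (p.1 - r)^2 + p.2^2 ≠ 0 := by
      intro h; apply htne; rw [ht_def]; simp [h]
    have h1 : HasFDerivAt (fun q : ℝ × ℝ => q.1^2 + q.2^2)
        ((2*p.1) • ContinuousLinearMap.fst ℝ ℝ ℝ + (2*p.2) • ContinuousLinearMap.snd ℝ ℝ ℝ) p := by
      have := ((hasFDerivAt_fst (𝕜 := ℝ) (p := p)).mul (hasFDerivAt_fst (𝕜 := ℝ) (p := p))).add
        ((hasFDerivAt_snd (𝕜 := ℝ) (p := p)).mul (hasFDerivAt_snd (𝕜 := ℝ) (p := p)))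
      simp only [pow_two]
      refine this.congr_fderiv ?_
      module
    have h1' : HasFDerivAt (fun q : ℝ × ℝ => (q.1 - r)^2 + q.2^2)
        ((2*(p.1 - r)) • ContinuousLinearMap.fst ℝ ℝ ℝ +
          (2*p.2) • ContinuousLinearMap.snd ℝ ℝ ℝ) p := by
      have hfs := (hasFDerivAt_fst (𝕜 := ℝ) (p := p)).sub_const r
      have := (hfs.mul hfs).add
        ((hasFDerivAt_snd (𝕜 := ℝ) (p := p)).mul (hasFDerivAt_snd (𝕜 := ℝ) (p := p)))
      simp only [pow_two]
      refine this.congr_fderiv ?_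
      module
    have hds : HasFDerivAt s
        ((p.1 / s p) • ContinuousLinearMap.fst ℝ ℝ ℝ +
          (p.2 / s p) • ContinuousLinearMap.snd ℝ ℝ ℝ) p := by
      have h2 := (Real.hasDerivAt_sqrt hsq_ne).comp_hasFDerivAt p h1
      refine h2.congr_fderiv ?_
      rw [smul_add, smul_smul, smul_smul]
      congr 1 <;> congr 1 <;> field_simp [hs_def] <;> ring
    have hdt : HasFDerivAt t
        (((p.1 - r) / t p) • ContinuousLinearMap.fst ℝ ℝ ℝ +
          (p.2 / t p) • ContinuousLinearMap.snd ℝ ℝ ℝ) p := by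
      have h2 := (Real.hasDerivAt_sqrt htq_ne).comp_hasFDerivAt p h1'
      refine h2.congr_fderiv ?_
      rw [smul_add, smul_smul, smul_smul]
      congr 1 <;> congr 1 <;> field_simp [ht_def] <;> ring
    have := (hds.add hdt).prodMk (hds.sub hdt)
    rw [hgd_def]
    simp only [Matrix.toLin_finTwoProd_toContinuousLinearMap]
    refine this.congr_fderiv ?_
    congr 1 <;> module
  have hdet : ∀ p ∈ A, (gd p).det = -((2 * p.2 * r) / (s p * t p)) := by
    intro p hp
    have hsne : s p ≠ 0 := (hs_pos p hp).ne'
    have htne : t p ≠ 0 := (ht_pos p hp).ne'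
    rw [hgd_def]
    simp only [LinearMap.det_toContinuousLinearMap, LinearMap.det_toLin, Matrix.det_fin_two_of]
    field_simp
    ring
  -- injectivity
  have hinj : InjOn g A := by
    intro p hp q hq hpq
    have h1 : s p + t p = s q + t q := congrArg Prod.fst hpq
    have h2 : s p - t p = s q - t q := congrArg Prod.snd hpq
    have hs_eq : s p = s q := by linarith
    have ht_eq : t p = t q := by linarith
    have hsq : p.1^2 + p.2^2 = q.1^2 + q.2^2 := by
      rw [← hs_sq p, ← hs_sq q, hs_eq]
    have htq : (p.1 - r)^2 + p.2^2 = (q.1 - r)^2 + q.2^2 := by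
      rw [← ht_sq p, ← ht_sq q, ht_eq]
    have hx : p.1 = q.1 := by nlinarith
    have hy : p.2 = q.2 := by
      rw [hmemA] at hp hq
      have hyy : p.2^2 = q.2^2 := by rw [hx] at hsq; linarith
      calc p.2 = Real.sqrt (p.2^2) := (Real.sqrt_sq hp.le).symm
        _ = Real.sqrt (q.2^2) := by rw [hyy]
        _ = q.2 := Real.sqrt_sq hq.le
    exact Prod.ext hx hy
  -- image
  have himg : g '' A = Ioi r ×ˢ Ioo (-r) r := by
    apply subset_antisymm
    · rintro q ⟨p, hp, rfl⟩
      have h1 := habs_s p hp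
      have h2 := habs_t p hp
      have hs0 := hs_pos p hp
      have ht0 := ht_pos p hp
      have e1 : p.1 ≤ |p.1| := le_abs_self _
      have e2 : -(p.1) ≤ |p.1| := neg_le_abs _
      have e3 : p.1 - r ≤ |p.1 - r| := le_abs_self _
      have e4 : -(p.1 - r) ≤ |p.1 - r| := neg_le_abs _
      constructor
      · show r < s p + t p
        linarith
      · constructor
        · show -r < s p - t p
          have h5 : 0 < r * (s p + p.1) := mul_pos hr (by linarith)
          have hsq1 : (t p)^2 < (s p + r)^2 := by
            have i1 := ht_sq p; have i2 := hs_sq p; nlinarith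
          have := lt_of_pow_lt_pow_left₀ 2 (by positivity : (0:ℝ) ≤ s p + r) hsq1
          linarith
        · show s p - t p < r
          have h5 : 0 < r * (t p + r - p.1) := mul_pos hr (by linarith)
          have hsq2 : (s p)^2 < (t p + r)^2 := by
            have i1 := ht_sq p; have i2 := hs_sq p; nlinarith
          have := lt_of_pow_lt_pow_left₀ 2 (by positivity : (0:ℝ) ≤ t p + r) hsq2
          linarith
    · rintro ⟨u, v⟩ ⟨hu, hv⟩
      simp only [mem_Ioi] at hu
      simp only [mem_Ioo] at hv
      set x : ℝ := (u*v + r^2) / (2*r) with hx_def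
      have hkey : ((u+v)/2)^2 - x^2 = (u-r)*(r-v)*((u+r)*(r+v)) / (4*r^2) := by
        rw [hx_def]; field_simp; ring
      have hpos : 0 < ((u+v)/2)^2 - x^2 := by
        rw [hkey]
        have f1 : 0 < u - r := by linarith
        have f2 : 0 < r - v := by linarith
        have f3 : 0 < u + r := by linarith
        have f4 : 0 < r + v := by linarith
        positivity
      set ρ : ℝ := Real.sqrt (((u+v)/2)^2 - x^2) with hρ_def
      have hρpos : 0 < ρ := Real.sqrt_pos.2 hpos
      have hρsq : ρ^2 = ((u+v)/2)^2 - x^2 := Real.sq_sqrt hpos.le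
      refine ⟨(x, ρ), ?_, ?_⟩
      · rw [hmemA]; exact hρpos
      · have huv : 0 < u + v := by linarith
        have huv' : 0 < u - v := by linarith
        have hsv : s (x, ρ) = (u+v)/2 := by
          rw [hs_def]
          have : x^2 + ρ^2 = ((u+v)/2)^2 := by rw [hρsq]; ring
          simp only [this]
          rw [Real.sqrt_sq (by linarith)]
        have htv : t (x, ρ) = (u-v)/2 := by
          rw [ht_def]
          have : (x - r)^2 + ρ^2 = ((u-v)/2)^2 := by
            rw [hρsq, hx_def]; field_simp; ring
          simp only [this]
          rw [Real.sqrt_sq (by linarith)]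
        rw [hg_def]
        simp only [hsv, htv]
        ext <;> simp <;> ring
  -- the change of variables
  have hmain := lintegral_image_eq_lintegral_abs_det_fderiv_mul volume hA
    (fun p hp => (hgd p hp).hasFDerivWithinAt) hinj
    (fun q => ENNReal.ofReal (1 / (2*r)) * H q.1)
  rw [himg] at hmain
  have hcongr : ∫⁻ p in A, ENNReal.ofReal |(gd p).det|
      * (ENNReal.ofReal (1 / (2*r)) * H ((g p).1)) =
      ∫⁻ p in A, ENNReal.ofReal (p.2 / (s p * t p)) * H (s p + t p) := by
    refine setLIntegral_congr_fun hA (fun p hp => ?_)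
    have hs0 := hs_pos p hp
    have ht0 := ht_pos p hp
    have hp2 : 0 < p.2 := (hmemA p).1 hp
    rw [hdet p hp, abs_neg, abs_of_pos (by positivity), ← mul_assoc,
      ← ENNReal.ofReal_mul (by positivity)]
    have : 2 * p.2 * r / (s p * t p) * (1 / (2*r)) = p.2 / (s p * t p) := by
      field_simp
    rw [this]
  rw [hcongr] at hmain
  rw [← hmain]
  exact lintegral_const_mul _ (show Measurable fun q : ℝ × ℝ => H q.1 from
    hH.comp measurable_fst)

theorem rect_fst (a b c : ℝ) (H : ℝ → ℝ≥0∞) (hH : Measurable H) :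
    ∫⁻ q : ℝ × ℝ in Ioi a ×ˢ Ioo b c, H q.1 =
      ENNReal.ofReal (c - b) * ∫⁻ u in Ioi a, H u := by
  rw [Measure.volume_eq_prod, ← Measure.prod_restrict,
    lintegral_prod (fun q : ℝ × ℝ => H q.1)
      (show Measurable fun q : ℝ × ℝ => H q.1 from hH.comp measurable_fst).aemeasurable]
  simp only [lintegral_const, Measure.restrict_apply MeasurableSet.univ, univ_inter,
    Real.volume_Ioo]
  rw [lintegral_mul_const _ hH, mul_comm]

theorem core3d (r : ℝ) (hr : 0 < r) (H : ℝ → ℝ≥0∞) (hH : Measurable H) :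
    ∫⁻ p : ℝ × ℝ × ℝ,
        ENNReal.ofReal (1 / (Real.sqrt (p.1^2 + (p.2.1^2 + p.2.2^2))
            * Real.sqrt ((p.1 - r)^2 + (p.2.1^2 + p.2.2^2))))
          * H (Real.sqrt (p.1^2 + (p.2.1^2 + p.2.2^2))
            + Real.sqrt ((p.1 - r)^2 + (p.2.1^2 + p.2.2^2))) =
      ENNReal.ofReal (2 * π) * ∫⁻ u in Ioi r, H u := by
  -- the 2d kernel
  set K : ℝ × ℝ → ℝ≥0∞ := fun p =>
    ENNReal.ofReal (1 / (Real.sqrt (p.1^2 + p.2^2) * Real.sqrt ((p.1 - r)^2 + p.2^2)))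
      * H (Real.sqrt (p.1^2 + p.2^2) + Real.sqrt ((p.1 - r)^2 + p.2^2)) with hK_def
  have hKm : Measurable K := by
    apply Measurable.mul
    · apply Measurable.ennreal_ofReal
      fun_prop
    · apply hH.comp
      fun_prop
  set F : ℝ × ℝ × ℝ → ℝ≥0∞ := fun p => K (p.1, Real.sqrt (p.2.1^2 + p.2.2^2)) with hF_def
  have hFm : Measurable F := by
    apply hKm.comp
    fun_prop
  have hFeq : ∀ p : ℝ × ℝ × ℝ, F p =
      ENNReal.ofReal (1 / (Real.sqrt (p.1^2 + (p.2.1^2 + p.2.2^2))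
          * Real.sqrt ((p.1 - r)^2 + (p.2.1^2 + p.2.2^2))))
        * H (Real.sqrt (p.1^2 + (p.2.1^2 + p.2.2^2))
          + Real.sqrt ((p.1 - r)^2 + (p.2.1^2 + p.2.2^2))) := by
    intro p
    have h0 : (0:ℝ) ≤ p.2.1^2 + p.2.2^2 := by positivity
    rw [hF_def, hK_def]
    simp only [Real.sq_sqrt h0]
  calc
    ∫⁻ p : ℝ × ℝ × ℝ,
        ENNReal.ofReal (1 / (Real.sqrt (p.1^2 + (p.2.1^2 + p.2.2^2))
            * Real.sqrt ((p.1 - r)^2 + (p.2.1^2 + p.2.2^2))))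
          * H (Real.sqrt (p.1^2 + (p.2.1^2 + p.2.2^2))
            + Real.sqrt ((p.1 - r)^2 + (p.2.1^2 + p.2.2^2)))
        = ∫⁻ p : ℝ × ℝ × ℝ, F p := by
      exact lintegral_congr fun p => (hFeq p).symm
    _ = ∫⁻ x : ℝ, ∫⁻ yz : ℝ × ℝ, F (x, yz) := by
      rw [Measure.volume_eq_prod]
      exact lintegral_prod F hFm.aemeasurable
    _ = ∫⁻ x : ℝ, ENNReal.ofReal (2 * π) *
          ∫⁻ ρ in Ioi (0:ℝ), ENNReal.ofReal ρ * K (x, ρ) := by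
      apply lintegral_congr fun x => ?_
      rw [my_lintegral_polar (fun yz => F (x, yz))]
      have hpt : ∀ q : ℝ × ℝ, F (x, polarCoord.symm q) = K (x, |q.1|) := by
        intro q
        rw [hF_def]
        simp only [polarCoord_symm_apply]
        congr 2
        rw [mul_pow, mul_pow, ← mul_add, add_comm ((Real.cos q.2)^2),
          Real.sin_sq_add_cos_sq, mul_one, Real.sqrt_sq_eq_abs]
      have h1 : ∫⁻ q in polarCoord.target, ENNReal.ofReal q.1 * F (x, polarCoord.symm q)
          = ∫⁻ q in polarCoord.target, (fun u => ENNReal.ofReal u * K (x, u)) q.1 := by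
        refine setLIntegral_congr_fun (polarCoord.open_target.measurableSet)
          (fun q hq => ?_)
        rw [hpt q, abs_of_pos hq.1]
      rw [h1, polarCoord_target]
      rw [rect_fst 0 (-π) π (fun u => ENNReal.ofReal u * K (x, u))
        ((measurable_id.ennreal_ofReal).mul (hKm.comp (measurable_const.prodMk
          measurable_id)))]
      rw [sub_neg_eq_add, ← two_mul]
    _ = ENNReal.ofReal (2 * π) *
          ∫⁻ x : ℝ, ∫⁻ ρ in Ioi (0:ℝ), ENNReal.ofReal ρ * K (x, ρ) := by
      rw [lintegral_const_mul]
      apply Measurable.lintegral_prod_right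
      exact (measurable_snd.ennreal_ofReal).mul (hKm.comp
        (measurable_fst.prodMk measurable_snd))
    _ = ENNReal.ofReal (2 * π) *
          ∫⁻ p : ℝ × ℝ in (univ : Set ℝ) ×ˢ Ioi (0:ℝ), ENNReal.ofReal p.2 * K p := by
      congr 1
      rw [Measure.volume_eq_prod, ← Measure.prod_restrict, Measure.restrict_univ]
      exact (lintegral_prod (fun p : ℝ × ℝ => ENNReal.ofReal p.2 * K p)
        (((measurable_snd.ennreal_ofReal).mul (hKm.comp
          (measurable_fst.prodMk measurable_snd))).aemeasurable)).symm
    _ = ENNReal.ofReal (2 * π) * ∫⁻ p : ℝ × ℝ in (univ : Set ℝ) ×ˢ Ioi (0:ℝ),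
          ENNReal.ofReal (p.2 / (Real.sqrt (p.1^2 + p.2^2) * Real.sqrt ((p.1 - r)^2 + p.2^2)))
            * H (Real.sqrt (p.1^2 + p.2^2) + Real.sqrt ((p.1 - r)^2 + p.2^2)) := by
      congr 1
      refine setLIntegral_congr_fun (MeasurableSet.univ.prod measurableSet_Ioi)
        (fun p hp => ?_)
      have hp2 : 0 < p.2 := hp.2
      rw [hK_def, ← mul_assoc, ← ENNReal.ofReal_mul hp2.le, mul_one_div]
    _ = ENNReal.ofReal (2 * π) *
        (ENNReal.ofReal (1 / (2*r)) * ∫⁻ q : ℝ × ℝ in Ioi r ×ˢ Ioo (-r) r, H q.1) := by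
      rw [core2d r hr H hH]
    _ = ENNReal.ofReal (2 * π) *
        (ENNReal.ofReal (1 / (2*r)) * (ENNReal.ofReal (r - -r) * ∫⁻ u in Ioi r, H u)) := by
      rw [rect_fst _ _ _ _ hH]
    _ = ENNReal.ofReal (2 * π) * ∫⁻ u in Ioi r, H u := by
      rw [← mul_assoc (ENNReal.ofReal (1 / (2*r))), ← ENNReal.ofReal_mul (by positivity)]
      have : 1 / (2*r) * (r - -r) = 1 := by field_simp; ring
      rw [this, ENNReal.ofReal_one, one_mul]
theorem stmt3 (ξ : EuclideanSpace ℝ (Fin 3)) (hξ : ξ ≠ 0) :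
    Measure.map (fun η : EuclideanSpace ℝ (Fin 3) => ‖η‖ + ‖ξ - η‖)
        (volume.withDensity fun η => ENNReal.ofReal (1 / (‖η‖ * ‖ξ - η‖))) =
      ENNReal.ofReal (2 * π) • volume.restrict (Set.Ici ‖ξ‖) := by
  have hr : 0 < ‖ξ‖ := norm_pos_iff.2 hξ
  set r : ℝ := ‖ξ‖ with hr_def
  have hf : Measurable (fun η : EuclideanSpace ℝ (Fin 3) => ‖η‖ + ‖ξ - η‖) := by fun_prop
  ext s hs
  rw [Measure.map_apply hf hs, withDensity_apply _ (hf hs), Measure.smul_apply,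
    Measure.restrict_apply hs, smul_eq_mul]
  set H : ℝ → ℝ≥0∞ := s.indicator (fun _ => 1) with hH_def
  have hHm : Measurable H := measurable_const.indicator hs
  -- rewrite as a full-space integral
  have h1 : ∫⁻ η in (fun η : EuclideanSpace ℝ (Fin 3) => ‖η‖ + ‖ξ - η‖) ⁻¹' s,
      ENNReal.ofReal (1 / (‖η‖ * ‖ξ - η‖)) =
      ∫⁻ η : EuclideanSpace ℝ (Fin 3),
        ENNReal.ofReal (1 / (‖η‖ * ‖ξ - η‖)) * H (‖η‖ + ‖ξ - η‖) := by
    rw [← lintegral_indicator (hf hs)]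
    refine lintegral_congr fun η => ?_
    by_cases h : ‖η‖ + ‖ξ - η‖ ∈ s <;>
      simp [hH_def, Set.indicator, h]
  rw [h1]
  -- rotation: replace ξ by r • e₀
  set ξ₀ : EuclideanSpace ℝ (Fin 3) := r • (EuclideanSpace.single (0 : Fin 3) (1:ℝ)) with hξ₀_def
  have hξ₀_norm : ‖ξ₀‖ = ‖ξ‖ := by
    rw [hξ₀_def, norm_smul, EuclideanSpace.norm_single]
    simp [hr_def, abs_of_pos hr]
  set R : EuclideanSpace ℝ (Fin 3) ≃ₗᵢ[ℝ] EuclideanSpace ℝ (Fin 3) :=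
    Submodule.reflection (ℝ ∙ (ξ₀ - ξ))ᗮ with hR_def
  have hRξ₀ : R ξ₀ = ξ := Submodule.reflection_sub hξ₀_norm
  have hWm : Measurable (fun η : EuclideanSpace ℝ (Fin 3) =>
      ENNReal.ofReal (1 / (‖η‖ * ‖ξ - η‖)) * H (‖η‖ + ‖ξ - η‖)) := by
    apply Measurable.mul
    · apply Measurable.ennreal_ofReal; fun_prop
    · exact hHm.comp hf
  have h2 : ∫⁻ η : EuclideanSpace ℝ (Fin 3),
      ENNReal.ofReal (1 / (‖η‖ * ‖ξ - η‖)) * H (‖η‖ + ‖ξ - η‖) =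
      ∫⁻ η : EuclideanSpace ℝ (Fin 3),
        ENNReal.ofReal (1 / (‖η‖ * ‖ξ₀ - η‖)) * H (‖η‖ + ‖ξ₀ - η‖) := by
    rw [← (R.measurePreserving).lintegral_comp hWm]
    refine lintegral_congr fun η => ?_
    have e1 : ‖R η‖ = ‖η‖ := R.norm_map η
    have e2 : ‖ξ - R η‖ = ‖ξ₀ - η‖ := by
      rw [← hRξ₀, ← map_sub, R.norm_map]
    simp only [e1, e2]
  rw [h2]
  -- coordinates
  have hT : MeasurePreserving (fun η : EuclideanSpace ℝ (Fin 3) =>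
      ((η 0 : ℝ), ((η 1 : ℝ), (η 2 : ℝ)))) volume volume := by
    have hT1 := EuclideanSpace.volume_preserving_symm_measurableEquiv_toLp (Fin 3)
    have hT2 := volume_preserving_piFinSuccAbove (fun _ : Fin 3 => ℝ) 0
    have hT3 : MeasurePreserving
        (Prod.map (id : ℝ → ℝ) (MeasurableEquiv.finTwoArrow : (Fin 2 → ℝ) → ℝ × ℝ))
        volume volume := by
      have := (MeasurePreserving.id (volume : Measure ℝ)).prod
        (volume_preserving_finTwoArrow ℝ)
      rwa [← Measure.volume_eq_prod, ← Measure.volume_eq_prod] at this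
    have := (hT3.comp hT2).comp hT1
    convert this using 1
    rfl
    rfl
  have h3 : ∫⁻ η : EuclideanSpace ℝ (Fin 3),
      ENNReal.ofReal (1 / (‖η‖ * ‖ξ₀ - η‖)) * H (‖η‖ + ‖ξ₀ - η‖) =
      ∫⁻ p : ℝ × ℝ × ℝ,
        ENNReal.ofReal (1 / (Real.sqrt (p.1^2 + (p.2.1^2 + p.2.2^2))
            * Real.sqrt ((p.1 - r)^2 + (p.2.1^2 + p.2.2^2))))
          * H (Real.sqrt (p.1^2 + (p.2.1^2 + p.2.2^2))
            + Real.sqrt ((p.1 - r)^2 + (p.2.1^2 + p.2.2^2))) := by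
    rw [← hT.lintegral_comp]
    · refine lintegral_congr fun η => ?_
      have en : ‖η‖ = Real.sqrt ((η 0)^2 + ((η 1)^2 + (η 2)^2)) := by
        rw [EuclideanSpace.norm_eq, Fin.sum_univ_three]
        simp only [Real.norm_eq_abs, sq_abs]
        ring_nf
      have en2 : ‖ξ₀ - η‖ = Real.sqrt ((η 0 - r)^2 + ((η 1)^2 + (η 2)^2)) := by
        rw [EuclideanSpace.norm_eq, Fin.sum_univ_three]
        have c0 : (ξ₀ - η) 0 = r - η 0 := by
          simp [hξ₀_def, EuclideanSpace.single_apply]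
        have c1 : (ξ₀ - η) 1 = -(η 1) := by
          simp [hξ₀_def, EuclideanSpace.single_apply]
        have c2 : (ξ₀ - η) 2 = -(η 2) := by
          simp [hξ₀_def, EuclideanSpace.single_apply]
        rw [c0, c1, c2]
        simp only [Real.norm_eq_abs, sq_abs]
        have : (r - η 0)^2 = (η 0 - r)^2 := by ring
        rw [this]
        ring_nf
      rw [en, en2]
    · apply Measurable.mul
      · apply Measurable.ennreal_ofReal; fun_prop
      · apply hHm.comp; fun_prop
  rw [h3, core3d r hr H hHm]
  -- finish: ∫⁻ in Ioi r, H = volume (s ∩ Ici r)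
  congr 1
  calc ∫⁻ u in Ioi r, H u ∂volume = ∫⁻ _ in s, (1:ℝ≥0∞) ∂(volume.restrict (Ioi r)) := by
        rw [hH_def, lintegral_indicator hs]
    _ = (volume.restrict (Ioi r)) s := setLIntegral_one s
    _ = volume (s ∩ Ioi r) := Measure.restrict_apply hs
    _ = volume (s ∩ Ici r) :=
        measure_congr ((Filter.EventuallyEq.refl _ s).inter Ioi_ae_eq_Ici)
end
end

section
/- If ω₁,…,ω₆ ∈ S¹ ⊂ ℂ are unit complex numbers with ω₁ + ω₂ + ω₃ + ω₄ + ω₅ + ω₆ = 0, and k,ℓ,m are nonnegative integers such that (ω₁ ω̄₂)^k (ω₃ ω̄₄)^ℓ (ω₅ ω̄₆)^m = 1 for all such 6-tuples, then k = ℓ = m = 0. -/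
open Complex

lemma aux_pow_eq_one (n : ℕ) (h : ∀ z : ℂ, ‖z‖ = 1 → z ^ n = 1) : n = 0 := by
  by_contra hn
  have hnpos : (0:ℝ) < n := by positivity
  set z : ℂ := Complex.exp ((Real.pi / n : ℝ) * I) with hz
  have hznorm : ‖z‖ = 1 := by
    rw [hz, Complex.norm_exp_ofReal_mul_I]
  have hzn : z ^ n = -1 := by
    rw [hz, ← Complex.exp_nat_mul]
    have hne : (n : ℂ) ≠ 0 := Nat.cast_ne_zero.mpr hn
    have : (n : ℂ) * ((Real.pi / n : ℝ) * I) = Real.pi * I := by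
      push_cast
      field_simp
    rw [this, Complex.exp_pi_mul_I]
  have := h z hznorm
  rw [hzn] at this
  norm_num at this

theorem stmt9 (k l m : ℕ)
    (h : ∀ ω : Fin 6 → ℂ, (∀ i, ‖ω i‖ = 1) → (∑ i, ω i) = 0 →
      (ω 0 * starRingEnd ℂ (ω 1)) ^ k * (ω 2 * starRingEnd ℂ (ω 3)) ^ l *
        (ω 4 * starRingEnd ℂ (ω 5)) ^ m = 1) :
    k = 0 ∧ l = 0 ∧ m = 0 := by
  -- Family A: for each unit t, t^(k+l) * (-1)^m = 1
  have hA : ∀ t : ℂ, ‖t‖ = 1 → t ^ (k + l) * (-1 : ℂ) ^ m = 1 := by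
    intro t ht
    have := h ![t, 1, -t, -1, 1, -1]
      (by intro i; fin_cases i <;> simp [ht, show ![t,1,-t,-1,1,-1] 5 = -1 from rfl])
      (by simp [Fin.sum_univ_six, show ![t,1,-t,-1,1,-1] 5 = -1 from rfl])
    simpa [show ![t,1,-t,-1,1,-1] 5 = -1 from rfl, map_neg, map_one, pow_add,
      mul_comm, mul_assoc, mul_left_comm] using this
  -- Family B: for each unit t, t^(k+m) * (-1)^l = 1
  have hB : ∀ t : ℂ, ‖t‖ = 1 → t ^ (k + m) * (-1 : ℂ) ^ l = 1 := by
    intro t ht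
    have := h ![t, 1, 1, -1, -t, -1]
      (by intro i; fin_cases i <;> simp [ht, show ![t,1,1,-1,-t,-1] 5 = -1 from rfl])
      (by simp [Fin.sum_univ_six, show ![t,1,1,-1,-t,-1] 5 = -1 from rfl])
    simpa [show ![t,1,1,-1,-t,-1] 5 = -1 from rfl, map_neg, map_one, pow_add,
      mul_comm, mul_assoc, mul_left_comm] using this
  have hm1 : (-1 : ℂ) ^ m = 1 := by simpa using hA 1 (by simp)
  have hl1 : (-1 : ℂ) ^ l = 1 := by simpa using hB 1 (by simp)
  have hkl : k + l = 0 := by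
    apply aux_pow_eq_one
    intro z hznorm
    have := hA z hznorm
    rwa [hm1, mul_one] at this
  have hkm : k + m = 0 := by
    apply aux_pow_eq_one
    intro z hznorm
    have := hB z hznorm
    rwa [hl1, mul_one] at this
  omega
end

section
/- If f : ℝ² → ℂ is measurable, not a.e. zero, and continuous, and there exists a function F such that f(η) f(ζ) = F(η + ζ, |η|² + |ζ|²) for all η, ζ ∈ ℝ², then f(η) = exp(A + b·η + c|η|²) for some A, c ∈ ℂ and b ∈ ℂ², with Re(c) determined so that f need not be in L²; in particular f is a (complex) Gaussian. -/
open MeasureTheory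

local notation "E2" => EuclideanSpace ℝ (Fin 2)


lemma oneD (H : ℝ → ℂ) (hc : Continuous H) (h0 : H 0 = 1)
    (hm : ∀ s t : ℝ, H (s + t) = H s * H t) :
    ∃ β : ℂ, ∀ t : ℝ, H t = Complex.exp (β * t) := by
  obtain ⟨δ, hδpos, hδ⟩ : ∃ δ : ℝ, 0 < δ ∧ ∀ s ∈ Set.Icc (0:ℝ) δ, ‖H s - 1‖ ≤ 1/2 := by
    have h' : ContinuousAt H 0 := hc.continuousAt
    rw [Metric.continuousAt_iff] at h'
    obtain ⟨ε, hε, h⟩ := h' (1/2) (by norm_num)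
    refine ⟨ε/2, by linarith, fun s hs => ?_⟩
    have hd : dist s 0 < ε := by
      simp only [Real.dist_eq, sub_zero]
      rw [abs_of_nonneg hs.1]; linarith [hs.2]
    have := h hd
    rw [h0] at this
    exact le_of_lt (by simpa [dist_eq_norm] using this)
  set a : ℂ := ∫ s in (0:ℝ)..δ, H s with ha
  have hane : a ≠ 0 := by
    intro h
    have h1 : ‖(∫ s in (0:ℝ)..δ, H s) - ∫ s in (0:ℝ)..δ, (1:ℂ)‖ ≤ 1/2 * |δ - 0| := by
      rw [← intervalIntegral.integral_sub (hc.intervalIntegrable _ _)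
        (intervalIntegrable_const)]
      apply intervalIntegral.norm_integral_le_of_norm_le_const
      intro x hx
      rw [Set.uIoc_of_le (le_of_lt hδpos)] at hx
      exact hδ x ⟨le_of_lt hx.1, hx.2⟩
    rw [← ha, h, intervalIntegral.integral_const, zero_sub, norm_neg, sub_zero,
      abs_of_pos hδpos] at h1
    have h2 : ‖(δ : ℝ) • (1:ℂ)‖ = δ := by
      simp [norm_smul, abs_of_pos hδpos]
    rw [h2] at h1
    linarith
  -- key integral identity
  have key : ∀ t : ℝ, H t = a⁻¹ * ((∫ s in (0:ℝ)..(t+δ), H s) - ∫ s in (0:ℝ)..t, H s) := by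
    intro t
    have h1 : (∫ s in (0:ℝ)..δ, H (t + s)) = H t * a := by
      rw [ha, ← intervalIntegral.integral_const_mul]
      apply intervalIntegral.integral_congr
      intro x _
      exact hm t x
    have h2 : (∫ s in (0:ℝ)..δ, H (t + s)) = ∫ s in t..(t+δ), H s := by
      simpa using intervalIntegral.integral_comp_add_left H t (a := (0:ℝ)) (b := δ)
    have h3 : (∫ s in (0:ℝ)..t, H s) + ∫ s in t..(t+δ), H s = ∫ s in (0:ℝ)..(t+δ), H s :=
      intervalIntegral.integral_add_adjacent_intervals (hc.intervalIntegrable _ _)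
        (hc.intervalIntegrable _ _)
    rw [← h3, ← h2, h1]
    field_simp
    ring
  have hG : ∀ t : ℝ, HasDerivAt (fun u => ∫ x in (0:ℝ)..u, H x) (H t) t := fun t =>
    intervalIntegral.integral_hasDerivAt_right (hc.intervalIntegrable _ _)
      hc.aestronglyMeasurable.stronglyMeasurableAtFilter hc.continuousAt
  have hdiff : ∀ t : ℝ, HasDerivAt H (a⁻¹ * (H (t+δ) - H t)) t := by
    intro t
    have h1 : HasDerivAt (fun u : ℝ => ∫ x in (0:ℝ)..(u+δ), H x) (H (t+δ)) t :=
      (hG (t+δ)).comp_add_const t δ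
    have h2 := ((h1.sub (hG t)).const_mul (a⁻¹))
    exact h2.congr_of_eventuallyEq (Filter.Eventually.of_forall fun u => key u)
  set β : ℂ := a⁻¹ * (H (0+δ) - H 0) with hβ
  have hODE : ∀ t : ℝ, HasDerivAt H (β * H t) t := by
    intro t
    have hK1 : HasDerivAt (fun s : ℝ => H t * H s) (H t * β) 0 := (hdiff 0).const_mul (H t)
    have hd' : HasDerivAt H (a⁻¹ * (H (t+δ) - H t)) (t + 0) := by simpa using hdiff t
    have hK2 : HasDerivAt (fun s : ℝ => H (t + s)) (a⁻¹ * (H (t+δ) - H t)) 0 :=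
      hd'.comp_const_add t 0
    have hK2' : HasDerivAt (fun s : ℝ => H t * H s) (a⁻¹ * (H (t+δ) - H t)) 0 := by
      apply hK2.congr_of_eventuallyEq (Filter.Eventually.of_forall fun s => (hm t s).symm)
    have := hK1.unique hK2'
    rw [mul_comm] at this
    rw [this]
    exact hdiff t
  refine ⟨β, fun t => ?_⟩
  have hJ : ∀ t : ℝ, HasDerivAt (fun t : ℝ => H t * Complex.exp (-β * t)) 0 t := by
    intro t
    have he : HasDerivAt (fun t : ℝ => Complex.exp (-β * t)) (Complex.exp (-β * t) * (-β)) t := by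
      apply HasDerivAt.cexp
      have h1 : HasDerivAt (fun t : ℝ => ((t:ℂ))) 1 t := by
        exact (hasDerivAt_id t).ofReal_comp
      simpa using h1.const_mul (-β)
    have := (hODE t).mul he
    convert this using 1
    · rfl
    · rfl
    ring
  have hconst : ∀ s : ℝ, H s * Complex.exp (-β * s) = 1 := by
    intro s
    have hd : Differentiable ℝ (fun t : ℝ => H t * Complex.exp (-β * t)) :=
      fun t => (hJ t).differentiableAt
    have := is_const_of_deriv_eq_zero hd (fun t => (hJ t).deriv) s 0
    simpa [h0] using this
  have := hconst t
  have hexp : Complex.exp (-β * t) = (Complex.exp (β * t))⁻¹ := by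
    rw [← Complex.exp_neg]; ring_nf
  rw [hexp] at this
  field_simp at this
  linear_combination this


lemma full_of_halfline (Ω : ℝ → ℂ)
    (hm : ∀ s t : ℝ, 0 ≤ s → 0 ≤ t → Ω (s + t) = Ω s * Ω t)
    (hinv : ∀ t : ℝ, Ω t * Ω (-t) = 1) :
    ∀ s t : ℝ, Ω (s + t) = Ω s * Ω t := by
  have hne : ∀ u : ℝ, Ω u ≠ 0 := by
    intro u h
    have := hinv u
    rw [h, zero_mul] at this
    exact zero_ne_one this
  have hneg : ∀ u : ℝ, Ω (-u) = (Ω u)⁻¹ := fun u =>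
    eq_inv_of_mul_eq_one_left (by rw [mul_comm]; exact hinv u)
  have main : ∀ s t : ℝ, 0 ≤ s → t ≤ 0 → Ω (s + t) = Ω s * Ω t := by
    intro s t hs ht
    rcases le_total 0 (s + t) with hst | hst
    · have h1 := hm (s + t) (-t) hst (by linarith)
      rw [show s + t + -t = s by ring, hneg] at h1
      field_simp [hne t, hne (s+t)] at h1
      rw [h1]
    · have h1 := hm (-(s + t)) s (by linarith) hs
      rw [show -(s + t) + s = -t by ring, hneg, hneg] at h1
      field_simp [hne t, hne (s+t)] at h1
      linear_combination h1
  intro s t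
  rcases le_total 0 s with hs | hs <;> rcases le_total 0 t with ht | ht
  · exact hm s t hs ht
  · exact main s t hs ht
  · rw [add_comm, mul_comm]; exact main t s ht hs
  · have h1 := hm (-s) (-t) (by linarith) (by linarith)
    rw [show -s + -t = -(s + t) by ring, hneg, hneg, hneg] at h1
    field_simp [hne s, hne t, hne (s+t)] at h1
    linear_combination -h1



lemma step_nonvanish (f : E2 → ℂ) (hcont : Continuous f)
    (hne : ¬ (∀ᵐ η ∂(volume : Measure E2), f η = 0))
    (F : E2 × ℝ → ℂ)
    (hF : ∀ η ζ : E2, f η * f ζ = F (η + ζ, ‖η‖ ^ 2 + ‖ζ‖ ^ 2)) :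
    ∀ x, f x ≠ 0 := by
  have hex : ∃ x₀, f x₀ ≠ 0 := by
    by_contra h
    push_neg at h
    exact hne (Filter.Eventually.of_forall h)
  obtain ⟨x₀, hx₀⟩ := hex
  intro z hz
  set Z : Set E2 := f ⁻¹' {0} with hZ
  have hZc : IsClosed Z := isClosed_singleton.preimage hcont
  have hZne : Z.Nonempty := ⟨z, hz⟩
  have hx₀Z : x₀ ∉ Z := by simp [hZ, hx₀]
  set d := Metric.infDist x₀ Z with hd
  have hdpos : 0 < d := (hZc.notMem_iff_infDist_pos hZne).1 hx₀Z
  obtain ⟨z₀, hz₀Z, hz₀d⟩ := hZc.exists_infDist_eq_dist hZne x₀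
  obtain ⟨v, hv⟩ : ∃ v : E2, v = (2⁻¹ : ℝ) • (z₀ - x₀) := ⟨_, rfl⟩
  obtain ⟨m, hm⟩ : ∃ m : E2, m = x₀ + v := ⟨_, rfl⟩
  obtain ⟨w, hw⟩ : ∃ w : E2, w = (WithLp.equiv 2 (Fin 2 → ℝ)).symm ![-(v 1), v 0] := ⟨_, rfl⟩
  have hw0 : w 0 = -(v 1) := by rw [hw]; rfl
  have hw1 : w 1 = v 0 := by rw [hw]; rfl
  have hnw : ‖w‖ = ‖v‖ := by
    rw [EuclideanSpace.norm_eq, EuclideanSpace.norm_eq]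
    congr 1
    rw [Fin.sum_univ_two, Fin.sum_univ_two, hw0, hw1, norm_neg]
    ring
  have hvw : inner ℝ v w = (0 : ℝ) := by
    rw [PiLp.inner_apply, Fin.sum_univ_two, hw0, hw1]
    simp only [RCLike.inner_apply, starRingEnd_apply, star_trivial]
    ring
  have hvv : v + v = z₀ - x₀ := by
    rw [hv, ← two_smul ℝ, smul_smul]; norm_num
  have hmv1 : m + v = z₀ := by rw [hm, add_assoc, hvv]; abel
  have hmv2 : m - v = x₀ := by rw [hm]; abel
  have hsum : (m + w) + (m - w) = z₀ + x₀ := by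
    have h' : (m + w) + (m - w) = (m + v) + (m - v) := by abel
    rw [h', hmv1, hmv2]
  have hnorm : ‖m + w‖ ^ 2 + ‖m - w‖ ^ 2 = ‖z₀‖ ^ 2 + ‖x₀‖ ^ 2 := by
    have p1 := parallelogram_law_with_norm ℝ m w
    have p2 := parallelogram_law_with_norm ℝ m v
    rw [← hmv1, ← hmv2]
    simp only [pow_two]
    rw [hnw] at p1
    linarith
  have hfz₀ : f z₀ = 0 := hz₀Z
  have h0 : f (m + w) * f (m - w) = 0 := by
    have h1 := hF (m + w) (m - w)
    have h2 := hF z₀ x₀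
    rw [hsum, hnorm] at h1
    rw [h1, ← h2, hfz₀, zero_mul]
  have hnv : ‖v‖ = d / 2 := by
    rw [hv, norm_smul]
    have : ‖z₀ - x₀‖ = d := by
      rw [hd, hz₀d, dist_eq_norm, norm_sub_rev]
    rw [this]
    simp
    ring
  rcases mul_eq_zero.1 h0 with h | h
  · -- m + w ∈ Z but too close
    have hmem : m + w ∈ Z := h
    have hle : d ≤ dist x₀ (m + w) := Metric.infDist_le_dist_of_mem hmem
    have hdd : dist x₀ (m + w) ^ 2 = d ^ 2 / 2 := by
      rw [dist_eq_norm]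
      have h1 : x₀ - (m + w) = -(v + w) := by rw [hm]; abel
      rw [h1, norm_neg, norm_add_sq_real, hvw, hnw, hnv]
      ring
    nlinarith [dist_nonneg (x := x₀) (y := m + w)]
  · have hmem : m - w ∈ Z := h
    have hle : d ≤ dist x₀ (m - w) := Metric.infDist_le_dist_of_mem hmem
    have hdd : dist x₀ (m - w) ^ 2 = d ^ 2 / 2 := by
      rw [dist_eq_norm]
      have h1 : x₀ - (m - w) = -(v - w) := by rw [hm]; abel
      rw [h1, norm_neg, norm_sub_sq_real, hvw, hnw, hnv]
      ring
    nlinarith [dist_nonneg (x := x₀) (y := m - w)]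



section
variable (f : E2 → ℂ) (F : E2 × ℝ → ℂ)
variable (hnz : ∀ x, f x ≠ 0)
variable (hF : ∀ η ζ : E2, f η * f ζ = F (η + ζ, ‖η‖ ^ 2 + ‖ζ‖ ^ 2))

include hnz hF in
lemma horth (u v : E2) (huv : inner ℝ u v = (0:ℝ)) :
    f (u + v) / f 0 = (f u / f 0) * (f v / f 0) := by
  have h1 := hF (u + v) 0
  have h2 := hF u v
  rw [add_zero, norm_zero] at h1
  have hn : ‖u + v‖ ^ 2 + 0 ^ 2 = ‖u‖ ^ 2 + ‖v‖ ^ 2 := by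
    rw [norm_add_sq_real, huv]; ring
  rw [hn, ← h2] at h1
  have h0 := hnz 0
  field_simp
  linear_combination h1

include hF in
lemma hrad (x y : E2) (hxy : ‖x‖ = ‖y‖) : f x * f (-x) = f y * f (-y) := by
  have h1 := hF x (-x)
  have h2 := hF y (-y)
  rw [add_neg_cancel, norm_neg] at h1 h2
  rw [hxy] at h1
  rw [h1, h2]
end

-- basic vectors
noncomputable def ee1 : E2 := EuclideanSpace.single 0 1
noncomputable def ee2 : E2 := EuclideanSpace.single 1 1

lemma norm_smul_ee1 (t : ℝ) : ‖t • ee1‖ = |t| := by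
  rw [norm_smul, ee1, EuclideanSpace.norm_single]
  simp [Real.norm_eq_abs]

lemma norm_smul_ee2 (t : ℝ) : ‖t • ee2‖ = |t| := by
  rw [norm_smul, ee2, EuclideanSpace.norm_single]
  simp [Real.norm_eq_abs]

lemma inner_ee12 (s t : ℝ) : inner ℝ (s • ee1) (t • ee2) = (0:ℝ) := by
  rw [real_inner_smul_left, real_inner_smul_right, ee1, ee2,
    EuclideanSpace.inner_single_left]
  simp [EuclideanSpace.single_apply]

lemma inner_ee21 (s t : ℝ) : inner ℝ (s • ee2) (t • ee1) = (0:ℝ) := by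
  rw [real_inner_smul_left, real_inner_smul_right, ee2, ee1,
    EuclideanSpace.inner_single_left]
  simp [EuclideanSpace.single_apply]

theorem stmt14 (f : EuclideanSpace ℝ (Fin 2) → ℂ) (hcont : Continuous f)
    (hne : ¬ (∀ᵐ η ∂(volume : Measure (EuclideanSpace ℝ (Fin 2))), f η = 0))
    (F : EuclideanSpace ℝ (Fin 2) × ℝ → ℂ)
    (hF : ∀ η ζ : EuclideanSpace ℝ (Fin 2), f η * f ζ = F (η + ζ, ‖η‖ ^ 2 + ‖ζ‖ ^ 2)) :
    ∃ (A c : ℂ) (b : Fin 2 → ℂ), ∀ η : EuclideanSpace ℝ (Fin 2),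
      f η = Complex.exp (A + (∑ i, b i * ((η i : ℝ) : ℂ)) + c * ((‖η‖ ^ 2 : ℝ) : ℂ)) := by
  have hnz := step_nonvanish f hcont hne F hF
  have h0 := hnz 0
  obtain ⟨φ, hφeq⟩ : ∃ g : E2 → ℂ, ∀ x, g x = f x / f 0 := ⟨_, fun _ => rfl⟩
  have hφfun : φ = fun x => f x / f 0 := funext hφeq
  have hφc : Continuous φ := by rw [hφfun]; exact hcont.div_const _
  have hφ0 : φ 0 = 1 := by rw [hφeq]; exact div_self h0
  have hφnz : ∀ x, φ x ≠ 0 := fun x => by rw [hφeq]; exact div_ne_zero (hnz x) h0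
  have hmulo : ∀ u v : E2, inner ℝ u v = (0:ℝ) → φ (u + v) = φ u * φ v := by
    intro u v huv
    rw [hφeq, hφeq, hφeq]
    exact horth f F hnz hF u v huv
  have hradφ : ∀ x y : E2, ‖x‖ = ‖y‖ → φ x * φ (-x) = φ y * φ (-y) := by
    intro x y hxy
    have h' := hrad f F hF x y hxy
    rw [hφeq, hφeq, hφeq, hφeq]
    field_simp
    linear_combination h'
  obtain ⟨ψ, hψeq⟩ : ∃ g : ℝ → ℂ, ∀ s, g s = φ (Real.sqrt s • ee1) * φ (-(Real.sqrt s • ee1)) :=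
    ⟨_, fun _ => rfl⟩
  have hψc : Continuous ψ := by
    rw [funext hψeq]
    have h1 : Continuous fun s : ℝ => Real.sqrt s • ee1 :=
      Real.continuous_sqrt.smul continuous_const
    exact (hφc.comp h1).mul (hφc.comp h1.neg)
  have hψval : ∀ x : E2, ψ (‖x‖ ^ 2) = φ x * φ (-x) := by
    intro x
    have hn : ‖Real.sqrt (‖x‖ ^ 2) • ee1‖ = ‖x‖ := by
      rw [norm_smul_ee1, Real.sqrt_sq (norm_nonneg x), abs_of_nonneg (norm_nonneg x)]
    rw [hψeq]
    exact hradφ _ _ hn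
  have hψ0 : ψ 0 = 1 := by
    rw [hψeq]
    simp only [Real.sqrt_zero, zero_smul, neg_zero, hφ0, mul_one]
  have hψnz : ∀ s, ψ s ≠ 0 := fun s => by
    rw [hψeq]; exact mul_ne_zero (hφnz _) (hφnz _)
  have hψm : ∀ s t : ℝ, 0 ≤ s → 0 ≤ t → ψ (s + t) = ψ s * ψ t := by
    intro s t hs ht
    have hu : ‖Real.sqrt s • ee1‖ ^ 2 = s := by
      rw [norm_smul_ee1, sq_abs, Real.sq_sqrt hs]
    have hv : ‖Real.sqrt t • ee2‖ ^ 2 = t := by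
      rw [norm_smul_ee2, sq_abs, Real.sq_sqrt ht]
    have hsum : ‖Real.sqrt s • ee1 + Real.sqrt t • ee2‖ ^ 2 = s + t := by
      rw [norm_add_sq_real, inner_ee12, hu, hv]; ring
    have e1 : ψ (s + t) = φ (Real.sqrt s • ee1 + Real.sqrt t • ee2)
        * φ (-(Real.sqrt s • ee1 + Real.sqrt t • ee2)) := by
      rw [← hsum]; exact hψval _
    have e2 : φ (Real.sqrt s • ee1 + Real.sqrt t • ee2)
        = φ (Real.sqrt s • ee1) * φ (Real.sqrt t • ee2) :=
      hmulo _ _ (inner_ee12 _ _)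
    have e3 : φ (-(Real.sqrt s • ee1 + Real.sqrt t • ee2))
        = φ (-(Real.sqrt s • ee1)) * φ (-(Real.sqrt t • ee2)) := by
      rw [neg_add]
      exact hmulo _ _ (by rw [inner_neg_neg]; exact inner_ee12 _ _)
    have e4 : ψ s = φ (Real.sqrt s • ee1) * φ (-(Real.sqrt s • ee1)) := hψeq s
    have e5 : ψ t = φ (Real.sqrt t • ee2) * φ (-(Real.sqrt t • ee2)) := by
      have := hψval (Real.sqrt t • ee2)
      rw [hv] at this
      exact this
    rw [e1, e2, e3, e4, e5]
    ring
  -- exponent for ψ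
  obtain ⟨H, hHeq⟩ : ∃ g : ℝ → ℂ, ∀ s, g s = ψ (max s 0) * (ψ (max (-s) 0))⁻¹ :=
    ⟨_, fun _ => rfl⟩
  have hHc : Continuous H := by
    rw [funext hHeq]
    exact (hψc.comp (continuous_id.max continuous_const)).mul
      ((hψc.comp (continuous_neg.max continuous_const)).inv₀ fun x => hψnz _)
  have hH0 : H 0 = 1 := by rw [hHeq]; simp [hψ0]
  have hHm : ∀ s t : ℝ, H (s + t) = H s * H t := by
    apply full_of_halfline
    · intro s t hs ht
      rw [hHeq, hHeq, hHeq]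
      rw [max_eq_left hs, max_eq_left ht, max_eq_left (by linarith : (0:ℝ) ≤ s + t),
        max_eq_right (neg_nonpos.mpr hs), max_eq_right (neg_nonpos.mpr ht),
        max_eq_right (neg_nonpos.mpr (by linarith : (0:ℝ) ≤ s + t)),
        hψm s t hs ht, hψ0]
      simp
    · intro t
      rw [hHeq, hHeq, neg_neg]
      have a1 := hψnz (max t 0)
      have a2 := hψnz (max (-t) 0)
      field_simp
  obtain ⟨γ, hγ⟩ := oneD H hHc hH0 hHm
  have hψexp : ∀ s : ℝ, 0 ≤ s → ψ s = Complex.exp (γ * s) := by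
    intro s hs
    have h1 := hγ s
    rw [hHeq, max_eq_left hs, max_eq_right (neg_nonpos.mpr hs), hψ0, inv_one, mul_one] at h1
    exact h1
  -- direction exponents
  have hdir : ∀ u w : E2, (∀ t : ℝ, ‖t • u‖ = |t|) → (∀ t : ℝ, ‖t • w‖ = |t|) →
      (∀ s t : ℝ, inner ℝ (s • u) (t • w) = (0:ℝ)) →
      ∃ b : ℂ, ∀ t : ℝ, φ (t • u) = Complex.exp (b * t + (γ/2) * (t:ℂ)^2) := by
    intro u w hnu hnw hor
    obtain ⟨Ω, hΩeq⟩ : ∃ g : ℝ → ℂ,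
        ∀ t, g t = φ (t • u) * Complex.exp (-(γ/2) * (t:ℂ)^2) := ⟨_, fun _ => rfl⟩
    have hΩc : Continuous Ω := by
      rw [funext hΩeq]
      apply Continuous.mul
      · exact hφc.comp (continuous_id.smul continuous_const)
      · exact Complex.continuous_exp.comp
          (continuous_const.mul (Complex.continuous_ofReal.pow 2))
    have hΩ0 : Ω 0 = 1 := by rw [hΩeq]; simp [hφ0]
    have hquad : ∀ t s : ℝ, 0 ≤ t → 0 ≤ s →
        φ ((t + s) • u) = φ (t • u) * φ (s • u) * ψ (t * s) := by
      intro t s ht hs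
      have hr2 : Real.sqrt (t*s) ^ 2 = t * s := Real.sq_sqrt (mul_nonneg ht hs)
      obtain ⟨r, hrdef⟩ : ∃ r : ℝ, r = Real.sqrt (t*s) := ⟨_, rfl⟩
      rw [← hrdef] at hr2
      have hkey : f ((t+s) • u) * f 0 = f (t • u + r • w) * f (s • u + (-r) • w) := by
        have h1 := hF ((t+s) • u) 0
        have h2 := hF (t • u + r • w) (s • u + (-r) • w)
        have hsum2 : (t • u + r • w) + (s • u + (-r) • w) = (t+s) • u + 0 := by module
        have hnorm2 : ‖(t+s) • u‖^2 + ‖(0:E2)‖^2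
            = ‖t • u + r • w‖^2 + ‖s • u + (-r) • w‖^2 := by
          rw [norm_add_sq_real, norm_add_sq_real, hor t r, hor s (-r),
            hnu (t+s), hnu t, hnu s, hnw r, hnw (-r)]
          simp only [norm_zero, sq_abs]
          linear_combination (-2 : ℝ) * hr2
        rw [hsum2, ← hnorm2] at h2
        exact h1.trans h2.symm
      have hφkey : φ ((t+s) • u) = φ (t • u + r • w) * φ (s • u + (-r) • w) := by
        rw [hφeq, hφeq, hφeq]
        simp only [neg_smul] at hkey ⊢
        field_simp
        linear_combination hkey
      have hw1 : φ (t • u + r • w) = φ (t • u) * φ (r • w) := hmulo _ _ (hor t r)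
      have hw2 : φ (s • u + (-r) • w) = φ (s • u) * φ ((-r) • w) := hmulo _ _ (hor s (-r))
      have hw3 : φ (r • w) * φ ((-r) • w) = ψ (t * s) := by
        have h' : ψ (‖r • w‖ ^ 2) = φ (r • w) * φ (-(r • w)) := hψval _
        rw [hnw r, sq_abs, hr2] at h'
        rw [neg_smul, ← h']
      rw [hφkey, hw1, hw2]
      linear_combination (φ (t • u) * φ (s • u)) * hw3
    have hΩm : ∀ s t : ℝ, Ω (s + t) = Ω s * Ω t := by
      apply full_of_halfline
      · intro s t hs ht
        rw [hΩeq, hΩeq, hΩeq]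
        rw [hquad s t hs ht, hψexp (s*t) (mul_nonneg hs ht)]
        have hexp : Complex.exp (γ * ((s*t : ℝ):ℂ)) * Complex.exp (-(γ/2) * ((s+t : ℝ):ℂ)^2)
            = Complex.exp (-(γ/2) * (s:ℂ)^2) * Complex.exp (-(γ/2) * (t:ℂ)^2) := by
          rw [← Complex.exp_add, ← Complex.exp_add]
          congr 1
          push_cast
          ring
        linear_combination (φ (s • u) * φ (t • u)) * hexp
      · intro t
        rw [hΩeq, hΩeq]
        have h1 : φ (t • u) * φ ((-t) • u) = Complex.exp (γ * ((t:ℂ)^2)) := by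
          have h2 : ψ (‖t • u‖ ^ 2) = φ (t • u) * φ (-(t • u)) := hψval _
          rw [hnu t, sq_abs] at h2
          rw [neg_smul, ← h2, hψexp (t^2) (sq_nonneg t)]
          push_cast
          ring_nf
        calc φ (t • u) * Complex.exp (-(γ/2) * (t:ℂ)^2)
              * (φ ((-t) • u) * Complex.exp (-(γ/2) * ((-t:ℝ):ℂ)^2))
            = (φ (t • u) * φ ((-t) • u))
              * (Complex.exp (-(γ/2) * (t:ℂ)^2) * Complex.exp (-(γ/2) * ((-t:ℝ):ℂ)^2)) := by
              ring
          _ = 1 := by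
              rw [h1, ← Complex.exp_add, ← Complex.exp_add, ← Complex.exp_zero]
              congr 1
              push_cast
              ring
    obtain ⟨b, hb⟩ := oneD Ω hΩc hΩ0 hΩm
    refine ⟨b, fun t => ?_⟩
    have h1 := hb t
    rw [hΩeq] at h1
    calc φ (t • u)
        = (φ (t • u) * Complex.exp (-(γ/2) * (t:ℂ)^2)) * Complex.exp ((γ/2) * (t:ℂ)^2) := by
          rw [mul_assoc, ← Complex.exp_add, neg_mul, neg_add_cancel, Complex.exp_zero, mul_one]
      _ = Complex.exp (b * t) * Complex.exp ((γ/2) * (t:ℂ)^2) := by rw [h1]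
      _ = Complex.exp (b * t + (γ/2) * (t:ℂ)^2) := (Complex.exp_add _ _).symm
  obtain ⟨b₁, hb₁⟩ := hdir ee1 ee2 norm_smul_ee1 norm_smul_ee2 inner_ee12
  obtain ⟨b₂, hb₂⟩ := hdir ee2 ee1 norm_smul_ee2 norm_smul_ee1 inner_ee21
  refine ⟨Complex.log (f 0), γ/2, ![b₁, b₂], fun η => ?_⟩
  have hdecomp : η = η 0 • ee1 + η 1 • ee2 := by
    ext i
    fin_cases i <;>
      simp [ee1, ee2, EuclideanSpace.single_apply, PiLp.add_apply, PiLp.smul_apply]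
  have hnormsq : ‖η‖ ^ 2 = η 0 ^ 2 + η 1 ^ 2 := by
    rw [← real_inner_self_eq_norm_sq, PiLp.inner_apply, Fin.sum_univ_two]
    simp only [RCLike.inner_apply, starRingEnd_apply, star_trivial]
    ring
  have hφη : φ η = φ (η 0 • ee1) * φ (η 1 • ee2) := by
    conv_lhs => rw [hdecomp]
    exact hmulo _ _ (inner_ee12 _ _)
  have hfη : f η = f 0 * φ η := by
    rw [hφeq]
    field_simp
  have harg : Complex.log (f 0) + (b₁ * (η 0 : ℝ) + (γ/2) * ((η 0 : ℝ):ℂ)^2)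
      + (b₂ * (η 1 : ℝ) + (γ/2) * ((η 1 : ℝ):ℂ)^2)
      = Complex.log (f 0) + (∑ i, ![b₁, b₂] i * ((η i : ℝ) : ℂ))
        + (γ/2) * ((‖η‖ ^ 2 : ℝ) : ℂ) := by
    rw [Fin.sum_univ_two, hnormsq]
    push_cast
    ring
  calc f η = f 0 * φ η := hfη
    _ = Complex.exp (Complex.log (f 0))
        * (Complex.exp (b₁ * (η 0 : ℝ) + (γ/2) * ((η 0 : ℝ):ℂ)^2)
          * Complex.exp (b₂ * (η 1 : ℝ) + (γ/2) * ((η 1 : ℝ):ℂ)^2)) := by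
        rw [hφη, hb₁, hb₂, Complex.exp_log h0]
    _ = Complex.exp (Complex.log (f 0) + (b₁ * (η 0 : ℝ) + (γ/2) * ((η 0 : ℝ):ℂ)^2)
        + (b₂ * (η 1 : ℝ) + (γ/2) * ((η 1 : ℝ):ℂ)^2)) := by
        simp only [← Complex.exp_add]
        congr 1
        ring
    _ = Complex.exp (Complex.log (f 0) + (∑ i, ![b₁, b₂] i * ((η i : ℝ) : ℂ))
        + (γ/2) * ((‖η‖ ^ 2 : ℝ) : ℂ)) := by rw [harg]
end

section
/- Let μ̃₂ be projection measure on the surface {(ξ,τ) ∈ ℝ³ : τ = |ξ|² + |ξ|⁴} and μ₂ projection measure on the paraboloid {τ = |ξ|²}. Then for every ξ ∈ ℝ² and τ > 0, (μ̃₂ ∗ μ̃₂)(ξ, |ξ|²/2 + |ξ|⁴/8 + τ) ≤ (μ₂ ∗ μ₂)(ξ, |ξ|²/2 + τ), i.e. the left-hand side is at most π/2. -/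
open MeasureTheory Real

/-- Projection measure on the graph `{τ = φ(ξ)}` over `ℝ²`. -/
noncomputable def graphMeasure (φ : EuclideanSpace ℝ (Fin 2) → ℝ) :
    Measure (EuclideanSpace ℝ (Fin 2) × ℝ) :=
  Measure.map (fun ξ => (ξ, φ ξ)) volume

section Aux
open Set

theorem lintegral_comp_polarCoord_symm' (f : ℝ × ℝ → ENNReal) :
    (∫⁻ p in polarCoord.target, ENNReal.ofReal p.1 * f (polarCoord.symm p)) = ∫⁻ p, f p := by
  set B : ℝ × ℝ → ℝ × ℝ →L[ℝ] ℝ × ℝ := fun p =>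
    LinearMap.toContinuousLinearMap (Matrix.toLin (Module.Basis.finTwoProd ℝ) (Module.Basis.finTwoProd ℝ)
      !![cos p.2, -p.1 * sin p.2; sin p.2, p.1 * cos p.2])
  have A : ∀ p ∈ polarCoord.target, HasFDerivWithinAt polarCoord.symm (B p) polarCoord.target p :=
    fun p _ => (hasFDerivAt_polarCoord_symm p).hasFDerivWithinAt
  have B_det : ∀ p, (B p).det = p.1 := by
    intro p
    conv_rhs => rw [← one_mul p.1, ← cos_sq_add_sin_sq p.2]
    simp only [B, neg_mul, LinearMap.det_toContinuousLinearMap, LinearMap.det_toLin,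
      Matrix.det_fin_two_of, sub_neg_eq_add]
    ring
  symm
  calc
    ∫⁻ p, f p = ∫⁻ p in polarCoord.source, f p := by
      rw [← setLIntegral_univ]
      exact (setLIntegral_congr polarCoord_source_ae_eq_univ).symm
    _ = ∫⁻ p in polarCoord.symm '' polarCoord.target, f p := by
      rw [polarCoord.symm_image_target_eq_source]
    _ = ∫⁻ p in polarCoord.target, ENNReal.ofReal |(B p).det| * f (polarCoord.symm p) := by
      exact lintegral_image_eq_lintegral_abs_det_fderiv_mul volume
        polarCoord.open_target.measurableSet A (polarCoord.symm.injOn) f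
    _ = ∫⁻ p in polarCoord.target, ENNReal.ofReal p.1 * f (polarCoord.symm p) := by
      refine setLIntegral_congr_fun polarCoord.open_target.measurableSet
        (fun x hx => ?_)
      rw [B_det, abs_of_pos hx.1]

theorem key1d (S : Set ℝ) (hS : MeasurableSet S) (A B : ℝ) (hB : 2 ≤ B) :
    (∫⁻ r in Ioi (0:ℝ), ENNReal.ofReal r * S.indicator 1 (A + B * r ^ 2 + 2 * r ^ 4))
      ≤ ENNReal.ofReal (1/4) * volume (S ∩ Ioi A) := by
  set G : ℝ → ℝ := fun r => A + B * r ^ 2 + 2 * r ^ 4 with hG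
  set G' : ℝ → ℝ := fun r => 2 * B * r + 8 * r ^ 3 with hG'
  have hGc : Continuous G := by fun_prop
  have hG'c : Continuous G' := by fun_prop
  have hderiv : ∀ r ∈ Ioi (0:ℝ), HasDerivWithinAt G (G' r) (Ioi 0) r := by
    intro r _
    have : HasDerivAt G (0 + B * (2 * r ^ 1) + 2 * (4 * r ^ 3)) r :=
      ((hasDerivAt_const r A).add ((hasDerivAt_pow 2 r).const_mul B)).add
        ((hasDerivAt_pow 4 r).const_mul 2)
    convert this.hasDerivWithinAt using 1
    show 2 * B * r + 8 * r ^ 3 = 0 + B * (2 * r ^ 1) + 2 * (4 * r ^ 3); ring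
    all_goals rfl
  have hinj : InjOn G (Ioi (0:ℝ)) := by
    have hmono : StrictMonoOn G (Ici (0:ℝ)) := by
      intro x hx y hy hxy
      simp only [hG]
      have h0 : (0:ℝ) ≤ x := hx
      have h1 : x^2 < y^2 := by nlinarith
      have h2 : x^4 < y^4 := by nlinarith [sq_nonneg x, sq_nonneg y]
      nlinarith
    exact (hmono.mono (Ioi_subset_Ici le_rfl)).injOn
  have hmeas : Measurable fun r => ENNReal.ofReal |G' r| * S.indicator 1 (G r) :=
    (ENNReal.measurable_ofReal.comp hG'c.abs.measurable).mul
      ((measurable_one.indicator hS).comp hGc.measurable)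
  have step1 : (∫⁻ r in Ioi (0:ℝ), ENNReal.ofReal r * S.indicator 1 (G r))
      ≤ ENNReal.ofReal (1/4) * ∫⁻ r in Ioi (0:ℝ),
          ENNReal.ofReal |G' r| * S.indicator 1 (G r) := by
    rw [← lintegral_const_mul' _ _ (by simp)]
    refine setLIntegral_mono (by exact (measurable_const.mul hmeas)) ?_
    intro r hr
    rw [← mul_assoc, ← ENNReal.ofReal_mul (by norm_num)]
    refine mul_le_mul_left (ENNReal.ofReal_le_ofReal ?_) _
    have h0 : (0:ℝ) < r := hr
    have hge : (0:ℝ) ≤ G' r := by simp only [hG']; nlinarith [pow_pos h0 3, mul_le_mul_of_nonneg_right hB h0.le]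
    rw [abs_of_nonneg hge]
    simp only [hG']
    nlinarith [pow_pos h0 3, mul_le_mul_of_nonneg_right hB h0.le]
  have step2 : (∫⁻ r in Ioi (0:ℝ), ENNReal.ofReal |G' r| * S.indicator 1 (G r))
      = volume (S ∩ G '' Ioi 0) := by
    have := lintegral_image_eq_lintegral_abs_det_fderiv_mul volume measurableSet_Ioi
      (fun x hx => (hderiv x hx).hasFDerivWithinAt) hinj (S.indicator 1)
    simp only [ContinuousLinearMap.det_toSpanSingleton] at this
    rw [← this, lintegral_indicator_one hS, Measure.restrict_apply hS]
  calc (∫⁻ r in Ioi (0:ℝ), ENNReal.ofReal r * S.indicator 1 (G r))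
      ≤ ENNReal.ofReal (1/4) * ∫⁻ r in Ioi (0:ℝ),
          ENNReal.ofReal |G' r| * S.indicator 1 (G r) := step1
    _ = ENNReal.ofReal (1/4) * volume (S ∩ G '' Ioi 0) := by rw [step2]
    _ ≤ ENNReal.ofReal (1/4) * volume (S ∩ Ioi A) := by
        refine mul_le_mul_right (measure_mono (inter_subset_inter_right _ ?_)) _
        rintro τ ⟨r, hr, rfl⟩
        have h0 : (0:ℝ) < r := hr
        simp only [hG, mem_Ioi]
        nlinarith

theorem core (b : ℝ × ℝ) (S : Set ℝ) (hS : MeasurableSet S) :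
    (∫⁻ x : ℝ × ℝ, S.indicator 1
      ((((b.1 - x.1)^2 + (b.2 - x.2)^2) + ((b.1 - x.1)^2 + (b.2 - x.2)^2)^2)
        + (((b.1 + x.1)^2 + (b.2 + x.2)^2) + ((b.1 + x.1)^2 + (b.2 + x.2)^2)^2)))
      ≤ ENNReal.ofReal (π/2) * volume (S ∩ Ici (2 * (b.1^2 + b.2^2))) := by
  set c : ℝ := b.1^2 + b.2^2 with hc
  have hc0 : 0 ≤ c := by positivity
  set ψ : ℝ × ℝ → ℝ := fun x =>
    (((b.1 - x.1)^2 + (b.2 - x.2)^2) + ((b.1 - x.1)^2 + (b.2 - x.2)^2)^2)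
      + (((b.1 + x.1)^2 + (b.2 + x.2)^2) + ((b.1 + x.1)^2 + (b.2 + x.2)^2)^2) with hψ
  set Bf : ℝ → ℝ := fun θ => 2 + 4*c + 8*(b.1 * cos θ + b.2 * sin θ)^2 with hBf
  set A : ℝ := 2*c + 2*c^2 with hA
  have key : ∀ p : ℝ × ℝ, ψ (polarCoord.symm p) = A + Bf p.2 * p.1^2 + 2 * p.1^4 := by
    intro p
    have h1 : cos p.2 ^ 2 + sin p.2 ^ 2 = 1 := by
      rw [← sin_sq_add_cos_sq p.2]; ring
    simp only [hψ, polarCoord_symm_apply, hBf, hA, hc]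
    linear_combination (2*p.1^2*(1 + 2*(b.1^2+b.2^2) + p.1^2*(cos p.2^2 + sin p.2^2)
      + p.1^2)) * h1
  rw [← lintegral_comp_polarCoord_symm' (fun x => S.indicator 1 (ψ x))]
  calc (∫⁻ p in polarCoord.target, ENNReal.ofReal p.1 * S.indicator 1 (ψ (polarCoord.symm p)))
      = ∫⁻ p in polarCoord.target,
          ENNReal.ofReal p.1 * S.indicator 1 (A + Bf p.2 * p.1^2 + 2 * p.1^4) := by
        exact lintegral_congr fun p => by rw [key p]
    _ = ∫⁻ θ in Ioo (-π) π, ∫⁻ r in Ioi (0:ℝ),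
          ENNReal.ofReal r * S.indicator 1 (A + Bf θ * r^2 + 2 * r^4) := by
        rw [polarCoord_target, Measure.volume_eq_prod, ← Measure.prod_restrict,
          lintegral_prod_symm]
        apply Measurable.aemeasurable
        apply Measurable.mul
        · fun_prop
        · apply (measurable_one.indicator hS).comp
          fun_prop
    _ ≤ ∫⁻ _ in Ioo (-π) π, ENNReal.ofReal (1/4) * volume (S ∩ Ici (2*c)) := by
        refine lintegral_mono_ae (Filter.Eventually.of_forall fun θ => ?_)
        refine le_trans (key1d S hS A (Bf θ)
          (by simp only [hBf]; nlinarith [sq_nonneg (b.1 * cos θ + b.2 * sin θ)])) ?_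
        refine mul_le_mul_right (measure_mono ?_) _
        rintro τ ⟨h1, h2⟩
        exact ⟨h1, le_trans (by nlinarith [sq_nonneg c] : 2*c ≤ A) (mem_Ioi.mp h2).le⟩
    _ = ENNReal.ofReal (π/2) * volume (S ∩ Ici (2*c)) := by
        rw [setLIntegral_const, Real.volume_Ioo, mul_comm, ← mul_assoc,
          ← ENNReal.ofReal_mul (by nlinarith [pi_pos])]
        congr 2
        ring

theorem coreE (a : EuclideanSpace ℝ (Fin 2)) (S : Set ℝ) (hS : MeasurableSet S) :
    volume {v : EuclideanSpace ℝ (Fin 2) |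
        (‖a - v‖^2 + ‖a - v‖^4) + (‖a + v‖^2 + ‖a + v‖^4) ∈ S}
      ≤ ENNReal.ofReal (π/2) * volume (S ∩ Ici (2 * ‖a‖^2)) := by
  have hnorm : ∀ w : EuclideanSpace ℝ (Fin 2), ‖w‖^2 = (w 0)^2 + (w 1)^2 := by
    intro w
    rw [EuclideanSpace.norm_eq, Real.sq_sqrt (by positivity)]
    simp [Fin.sum_univ_two]
  have hF : MeasurePreserving
      (fun v : EuclideanSpace ℝ (Fin 2) => ((v 0 : ℝ), (v 1 : ℝ))) volume volume := by
    have h1 := EuclideanSpace.volume_preserving_symm_measurableEquiv_toLp (Fin 2)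
    have h2 := volume_preserving_finTwoArrow ℝ
    exact h2.comp h1
  set b : ℝ × ℝ := (a 0, a 1) with hb
  set ψ : ℝ × ℝ → ℝ := fun x =>
    (((b.1 - x.1)^2 + (b.2 - x.2)^2) + ((b.1 - x.1)^2 + (b.2 - x.2)^2)^2)
      + (((b.1 + x.1)^2 + (b.2 + x.2)^2) + ((b.1 + x.1)^2 + (b.2 + x.2)^2)^2) with hψ
  have hψm : Measurable ψ := by fun_prop
  have hset : {v : EuclideanSpace ℝ (Fin 2) |
        (‖a - v‖^2 + ‖a - v‖^4) + (‖a + v‖^2 + ‖a + v‖^4) ∈ S}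
      = (fun v : EuclideanSpace ℝ (Fin 2) => ((v 0 : ℝ), (v 1 : ℝ))) ⁻¹' (ψ ⁻¹' S) := by
    ext v
    simp only [mem_setOf_eq, mem_preimage, hψ, hb]
    have e1 : ‖a - v‖^2 = (a 0 - v 0)^2 + (a 1 - v 1)^2 := by
      rw [hnorm]; rfl
    have e2 : ‖a + v‖^2 = (a 0 + v 0)^2 + (a 1 + v 1)^2 := by
      rw [hnorm]; rfl
    have e3 : ‖a - v‖^4 = ((a 0 - v 0)^2 + (a 1 - v 1)^2)^2 := by
      rw [show ‖a-v‖^4 = (‖a-v‖^2)^2 by ring, e1]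
    have e4 : ‖a + v‖^4 = ((a 0 + v 0)^2 + (a 1 + v 1)^2)^2 := by
      rw [show ‖a+v‖^4 = (‖a+v‖^2)^2 by ring, e2]
    rw [e1, e2, e3, e4]
  rw [hset, hF.measure_preimage (hψm hS).nullMeasurableSet]
  have : volume (ψ ⁻¹' S) = ∫⁻ x : ℝ × ℝ, S.indicator 1 (ψ x) := by
    rw [← lintegral_indicator_one (hψm hS)]
    exact lintegral_congr fun x => by
      by_cases h : ψ x ∈ S <;> simp [Set.indicator_apply, h]
  rw [this, hnorm a]
  exact core b S hS

end Aux

theorem stmt18 :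
    Measure.map
        (fun p : (EuclideanSpace ℝ (Fin 2) × ℝ) × (EuclideanSpace ℝ (Fin 2) × ℝ) => p.1 + p.2)
        ((graphMeasure fun ξ => ‖ξ‖ ^ 2 + ‖ξ‖ ^ 4).prod
          (graphMeasure fun ξ => ‖ξ‖ ^ 2 + ‖ξ‖ ^ 4)) ≤
      volume.withDensity (fun p : EuclideanSpace ℝ (Fin 2) × ℝ =>
        if ‖p.1‖ ^ 2 / 2 ≤ p.2 then ENNReal.ofReal (π / 2) else 0) := by
  set E := EuclideanSpace ℝ (Fin 2) with hE
  set φ : E → ℝ := fun ξ => ‖ξ‖ ^ 2 + ‖ξ‖ ^ 4 with hφ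
  have hφm : Measurable φ := by fun_prop
  have hgm : Measurable fun ξ : E => (ξ, φ ξ) := measurable_id.prodMk hφm
  have hH : Measurable fun q : E × E => (q.1 + q.2, φ q.1 + φ q.2) :=
    (measurable_fst.add measurable_snd).prodMk
      ((hφm.comp measurable_fst).add (hφm.comp measurable_snd))
  have hmapeq : Measure.map
        (fun p : (E × ℝ) × (E × ℝ) => p.1 + p.2)
        ((graphMeasure φ).prod (graphMeasure φ))
      = Measure.map (fun q : E × E => (q.1 + q.2, φ q.1 + φ q.2))
          ((volume : Measure E).prod volume) := by
    rw [graphMeasure, Measure.map_prod_map _ _ hgm hgm,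
      Measure.map_map (g := fun p : (E × ℝ) × (E × ℝ) => p.1 + p.2) (measurable_fst.add measurable_snd) (hgm.prodMap hgm)]
    rfl
  rw [hmapeq, Measure.le_iff]
  intro s hs
  -- the slice sets
  have hsliceM : ∀ u : E, MeasurableSet {τ : ℝ | (u, τ) ∈ s} := fun u =>
    measurable_prodMk_left hs
  -- LHS as iterated integral
  have hQ : MeasurableSet ((fun q : E × E => (q.1 + q.2, φ q.1 + φ q.2)) ⁻¹' s) := hH hs
  rw [Measure.map_apply hH hs]
  have hshear := (measurePreserving_sub_prod (volume : Measure E) (volume : Measure E))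
  have step1 : ((volume : Measure E).prod volume)
        ((fun q : E × E => (q.1 + q.2, φ q.1 + φ q.2)) ⁻¹' s)
      = ((volume : Measure E).prod volume)
        ((fun z : E × E => (z.1 - z.2, z.2)) ⁻¹'
          ((fun q : E × E => (q.1 + q.2, φ q.1 + φ q.2)) ⁻¹' s)) :=
    (hshear.measure_preimage hQ.nullMeasurableSet).symm
  rw [step1, ← Set.preimage_comp]
  have hcomp : ((fun q : E × E => (q.1 + q.2, φ q.1 + φ q.2)) ∘
        (fun z : E × E => (z.1 - z.2, z.2)))
      = fun z : E × E => (z.1, φ (z.1 - z.2) + φ z.2) := by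
    ext z
    · simp [sub_add_cancel]
    · simp
  rw [hcomp]
  have hQ2 : MeasurableSet ((fun z : E × E => (z.1, φ (z.1 - z.2) + φ z.2)) ⁻¹' s) := by
    exact (measurable_fst.prodMk
      ((hφm.comp (measurable_fst.sub measurable_snd)).add (hφm.comp measurable_snd))) hs
  rw [Measure.prod_apply hQ2]
  -- RHS
  set f : E × ℝ → ENNReal := fun p => if ‖p.1‖ ^ 2 / 2 ≤ p.2 then ENNReal.ofReal (π / 2) else 0
    with hf
  have hfm : Measurable f := by
    apply Measurable.ite _ measurable_const measurable_const
    exact measurableSet_le (by fun_prop) measurable_snd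
  have hRHS : volume.withDensity f s
      = ∫⁻ u : E, ENNReal.ofReal (π/2) *
          volume ({τ : ℝ | (u, τ) ∈ s} ∩ Set.Ici (‖u‖^2/2)) := by
    rw [withDensity_apply f hs, ← lintegral_indicator hs f, Measure.volume_eq_prod,
      lintegral_prod _ ((hfm.indicator hs).aemeasurable)]
    refine lintegral_congr fun u => ?_
    have hpt : ∀ τ : ℝ, s.indicator f (u, τ)
        = ({τ : ℝ | (u, τ) ∈ s} ∩ Set.Ici (‖u‖^2/2)).indicator
            (fun _ => ENNReal.ofReal (π/2)) τ := by
      intro τ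
      by_cases h1 : (u, τ) ∈ s <;> by_cases h2 : ‖u‖^2/2 ≤ τ <;>
        simp [Set.indicator_apply, h1, h2, hf, Set.mem_Ici]
    rw [lintegral_congr hpt, lintegral_indicator_const
      ((hsliceM u).inter measurableSet_Ici)]
  rw [hRHS]
  -- pointwise comparison in u
  refine lintegral_mono fun u => ?_
  -- inner translation by u/2
  set a : E := (2⁻¹ : ℝ) • u with ha
  have htrans := measurePreserving_add_left (volume : Measure E) a
  have hsetm : MeasurableSet {w : E | φ (u - w) + φ w ∈ {τ : ℝ | (u, τ) ∈ s}} := by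
    exact ((hφm.comp (measurable_const.sub measurable_id)).add hφm) (hsliceM u)
  have hPm : (Prod.mk u ⁻¹' ((fun z : E × E => (z.1, φ (z.1 - z.2) + φ z.2)) ⁻¹' s))
      = {w : E | φ (u - w) + φ w ∈ {τ : ℝ | (u, τ) ∈ s}} := rfl
  rw [hPm, ← htrans.measure_preimage hsetm.nullMeasurableSet]
  have hsub : ∀ v : E, u - (a + v) = a - v := by
    intro v
    rw [ha]
    rw [sub_add_eq_sub_sub]
    congr 1
    rw [sub_eq_iff_eq_add, ← add_smul]
    norm_num
  have hseteq : ((fun v : E => a + v) ⁻¹'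
        {w : E | φ (u - w) + φ w ∈ {τ : ℝ | (u, τ) ∈ s}})
      = {v : E | (‖a - v‖^2 + ‖a - v‖^4) + (‖a + v‖^2 + ‖a + v‖^4)
          ∈ {τ : ℝ | (u, τ) ∈ s}} := by
    ext v
    simp only [Set.mem_preimage, Set.mem_setOf_eq, hφ, hsub v]
  rw [hseteq]
  have hna : 2 * ‖a‖^2 = ‖u‖^2/2 := by
    rw [ha, norm_smul]
    simp [mul_pow]
    ring
  rw [← hna]
  exact coreE a _ (hsliceM u)
end
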